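/- Let B = k[X₁, X₂] be a polynomial ring over a field, a ∈ k, Q = X₂² − a·X₁·X₂, and t ≥ 2 an integer. Then the Hilbert series of B/(Q, X₁^t·X₂) is (1 + z − z^{t+1})/(1 − z); in particular its Hilbert function is 1, 2, 2, …, 2 (in degrees 1 through t), and 1 in every degree ≥ t+1. -/

import Mathlib

/-!
Write `X₁ = X 0`, `X₂ = X 1`, `Q = X₂(X₂ - aX₁)` and `g = X₁ᵗX₂`. The ideals `(Q)` and `(g)` are
homogeneous, so in each degree `Kₙ = (Q)ₙ + (g)ₙ`; and since the prime `X₁` does not divide `Q`,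
`(Q) ∩ (g) = (X₁ᵗQ)`. Multiplication by a nonzero form of degree `d` maps `S_{n-d}` isomorphically
onto the degree-`n` part of the principal ideal it generates, so the dimension formula for a sum of
subspaces gives `dim Kₙ = (n - 1) + (n - t) - (n - t - 1)` (each term truncated at `0`), and the
Hilbert function is `n + 1 - dim Kₙ`.
-/

open MvPolynomial

variable (k : Type*) [Field k]

/-- The Hilbert function of `k[X₁,X₂]/K` in degree `n`:
`dim_k S_n − dim_k K_n`. -/
noncomputable def hilbFn (k : Type*) [Field k] (K : Ideal (MvPolynomial (Fin 2) k)) (n : ℕ) : ℕ :=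
  Module.finrank k (homogeneousSubmodule (Fin 2) k n) -
    Module.finrank k
      (Submodule.restrictScalars k K ⊓ homogeneousSubmodule (Fin 2) k n : Submodule k _)

theorem Ideal.span_singleton_inf_span_singleton_pow_mul {R : Type*} [CommRing R] [IsDomain R]
    {p f h : R} (hp : Prime p) (hpf : ¬p ∣ f) (hhf : h ∣ f) (t : ℕ) :
    Ideal.span {f} ⊓ Ideal.span {p ^ t * h} = Ideal.span {p ^ t * f} := by
  apply le_antisymm
  · rintro x ⟨hxf, hxg⟩
    obtain ⟨u, rfl⟩ := Ideal.mem_span_singleton'.mp hxf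
    obtain ⟨v, rfl⟩ : p ^ t ∣ u := hp.pow_dvd_of_dvd_mul_right t hpf
      ((dvd_mul_right _ h).trans (Ideal.mem_span_singleton.mp hxg))
    exact Ideal.mem_span_singleton.mpr ⟨v, by ring⟩
  · obtain ⟨c, rfl⟩ := hhf
    rw [Ideal.span_singleton_le_iff_mem]
    exact ⟨Ideal.mem_span_singleton.mpr (dvd_mul_left _ _),
      Ideal.mem_span_singleton.mpr ⟨c, by ring⟩⟩

namespace MvPolynomial

variable {k} {σ : Type*}

theorem finrank_homogeneousSubmodule [Fintype σ] (n : ℕ) :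
    Module.finrank k (homogeneousSubmodule σ k n) = (Fintype.card σ + n - 1).choose n := by
  classical
  have hdeg : {d : σ →₀ ℕ | d.degree = n}
      = ((Finset.univ : Finset σ).finsuppAntidiag n : Set (σ →₀ ℕ)) := by
    ext d
    simp [Finset.mem_finsuppAntidiag, Finsupp.degree_eq_sum]
  rw [homogeneousSubmodule_eq_finsupp_supported, hdeg,
    (AddMonoidAlgebra.supportedEquivFinsupp _).finrank_eq, Module.finrank_finsupp_self]
  simp [Finset.card_finsuppAntidiag_nat_eq_choose]

theorem finrank_homogeneousSubmodule_fin_two (n : ℕ) :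
    Module.finrank k (homogeneousSubmodule (Fin 2) k n) = n + 1 := by
  rw [finrank_homogeneousSubmodule, Fintype.card_fin, show 2 + n - 1 = n + 1 by omega,
    Nat.choose_succ_self_right]

instance [Finite σ] (n : ℕ) : FiniteDimensional k (homogeneousSubmodule σ k n) :=
  Module.Finite.iff_fg.mpr (homogeneousSubmodule_fg (σ := σ) (R := k) n)

attribute [local instance] gradedAlgebra

theorem homogeneousComponent_add_mul_of_isHomogeneous {f : MvPolynomial σ k} {d : ℕ}
    (hf : f.IsHomogeneous d) (p : MvPolynomial σ k) (n : ℕ) :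
    homogeneousComponent (n + d) (p * f) = homogeneousComponent n p * f := by
  simp only [← decomposition.decompose'_apply]
  exact DirectSum.coe_decompose_mul_add_of_right_mem _ ((mem_homogeneousSubmodule _ _).mpr hf)

theorem homogeneousComponent_mul_of_isHomogeneous_of_lt {f : MvPolynomial σ k} {d n : ℕ}
    (hf : f.IsHomogeneous d) (p : MvPolynomial σ k) (hn : n < d) :
    homogeneousComponent n (p * f) = 0 := by
  rw [← decomposition.decompose'_apply]
  exact DirectSum.coe_decompose_mul_of_right_mem_of_not_le _
    ((mem_homogeneousSubmodule _ _).mpr hf) (by omega)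

theorem isHomogeneous_span_singleton {f : MvPolynomial σ k} {d : ℕ} (hf : f.IsHomogeneous d) :
    (Ideal.span {f}).IsHomogeneous (homogeneousSubmodule σ k) :=
  Ideal.homogeneous_span _ _ (by simpa using ⟨d, hf⟩)

variable (k) in
noncomputable def idealDegreePart (I : Ideal (MvPolynomial σ k)) (n : ℕ) :
    Submodule k (MvPolynomial σ k) :=
  I.restrictScalars k ⊓ homogeneousSubmodule σ k n

instance [Finite σ] (I : Ideal (MvPolynomial σ k)) (n : ℕ) :
    FiniteDimensional k (idealDegreePart k I n) :=
  Submodule.finiteDimensional_of_le inf_le_right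

theorem idealDegreePart_sup {I J : Ideal (MvPolynomial σ k)}
    (hI : I.IsHomogeneous (homogeneousSubmodule σ k))
    (hJ : J.IsHomogeneous (homogeneousSubmodule σ k)) (n : ℕ) :
    idealDegreePart k (I ⊔ J) n = idealDegreePart k I n ⊔ idealDegreePart k J n := by
  refine le_antisymm ?_ (sup_le (fun x hx => ⟨Ideal.mem_sup_left hx.1, hx.2⟩)
    (fun x hx => ⟨Ideal.mem_sup_right hx.1, hx.2⟩))
  rintro x ⟨hxIJ, hx⟩
  obtain ⟨y, hy, z, hz, rfl⟩ := Submodule.mem_sup.mp hxIJ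
  rw [← homogeneousComponent_eq_self hx, map_add]
  exact Submodule.add_mem_sup
    ⟨homogeneousComponent_mem_of_mem hI hy n, homogeneousComponent_mem n y⟩
    ⟨homogeneousComponent_mem_of_mem hJ hz n, homogeneousComponent_mem n z⟩

theorem idealDegreePart_inf (I J : Ideal (MvPolynomial σ k)) (n : ℕ) :
    idealDegreePart k (I ⊓ J) n = idealDegreePart k I n ⊓ idealDegreePart k J n := by
  ext x
  simp only [idealDegreePart, Submodule.mem_inf, Submodule.restrictScalars_mem]
  tauto

theorem finrank_idealDegreePart_sup_add_inf [Finite σ] {I J : Ideal (MvPolynomial σ k)}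
    (hI : I.IsHomogeneous (homogeneousSubmodule σ k))
    (hJ : J.IsHomogeneous (homogeneousSubmodule σ k)) (n : ℕ) :
    Module.finrank k (idealDegreePart k (I ⊔ J) n) +
        Module.finrank k (idealDegreePart k (I ⊓ J) n) =
      Module.finrank k (idealDegreePart k I n) + Module.finrank k (idealDegreePart k J n) := by
  rw [idealDegreePart_sup hI hJ, idealDegreePart_inf]
  exact Submodule.finrank_sup_add_finrank_inf_eq _ _

theorem idealDegreePart_span_singleton_add {f : MvPolynomial σ k} {d : ℕ}
    (hf : f.IsHomogeneous d) (n : ℕ) :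
    idealDegreePart k (Ideal.span {f}) (n + d)
      = (homogeneousSubmodule σ k n).map (LinearMap.mulRight k f) := by
  apply le_antisymm
  · rintro x ⟨hxf, hx⟩
    obtain ⟨u, rfl⟩ := Ideal.mem_span_singleton'.mp hxf
    refine ⟨homogeneousComponent n u, homogeneousComponent_mem n u, ?_⟩
    rw [LinearMap.mulRight_apply, ← homogeneousComponent_add_mul_of_isHomogeneous hf,
      homogeneousComponent_eq_self hx]
  · rintro _ ⟨p, hp, rfl⟩
    exact ⟨Ideal.mul_mem_left _ p (Ideal.mem_span_singleton_self f),
      (mem_homogeneousSubmodule _ _).mpr (((mem_homogeneousSubmodule _ _).mp hp).mul hf)⟩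

theorem idealDegreePart_span_singleton_of_lt {f : MvPolynomial σ k} {d n : ℕ}
    (hf : f.IsHomogeneous d) (hn : n < d) :
    idealDegreePart k (Ideal.span {f}) n = ⊥ := by
  refine eq_bot_iff.mpr ?_
  rintro x ⟨hxf, hx⟩
  obtain ⟨u, rfl⟩ := Ideal.mem_span_singleton'.mp hxf
  rw [Submodule.mem_bot, ← homogeneousComponent_eq_self hx]
  exact homogeneousComponent_mul_of_isHomogeneous_of_lt hf u hn

/-- The truncated subtraction `n + 1 - d` is `0` exactly in the range `n < d`. -/
theorem finrank_idealDegreePart_span_singleton {f : MvPolynomial (Fin 2) k} {d : ℕ}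
    (hf : f.IsHomogeneous d) (hf0 : f ≠ 0) (n : ℕ) :
    Module.finrank k (idealDegreePart k (Ideal.span {f}) n) = n + 1 - d := by
  rcases lt_or_ge n d with hn | hn
  · rw [idealDegreePart_span_singleton_of_lt hf hn, finrank_bot]
    omega
  · obtain ⟨m, rfl⟩ := Nat.exists_eq_add_of_le' hn
    have hinj : Function.Injective (LinearMap.mulRight k f) := mul_left_injective₀ hf0
    rw [idealDegreePart_span_singleton_add hf,
      (Submodule.equivMapOfInjective _ hinj _).symm.finrank_eq,
      finrank_homogeneousSubmodule_fin_two]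
    omega

theorem isHomogeneous_X_one_sq_sub (a : k) :
    (X 1 ^ 2 - C a * X 0 * X 1 : MvPolynomial (Fin 2) k).IsHomogeneous 2 :=
  (isHomogeneous_X_pow 1 2).sub
    (by simpa using (isHomogeneous_C_mul_X a 0).mul (isHomogeneous_X k 1))

theorem X_zero_not_dvd_X_one_sq_sub (a : k) :
    ¬(X 0 : MvPolynomial (Fin 2) k) ∣ X 1 ^ 2 - C a * X 0 * X 1 := by
  have hX : ¬(X 0 : MvPolynomial (Fin 2) k) ∣ X 1 := by rw [X_dvd_X]; decide
  rw [show (X 1 ^ 2 - C a * X 0 * X 1 : MvPolynomial (Fin 2) k) = X 1 * (X 1 - C a * X 0) by ring,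
    X_dvd_mul_iff]
  rintro (h | h)
  · exact hX h
  · exact hX (by simpa using h.add (dvd_mul_left (X 0) (C a)))

theorem span_X_one_sq_sub_inf_span_X_zero_pow_mul_X_one (a : k) (t : ℕ) :
    Ideal.span {X 1 ^ 2 - C a * X 0 * X 1} ⊓ Ideal.span {X 0 ^ t * X 1}
      = Ideal.span {(X 0 ^ t * (X 1 ^ 2 - C a * X 0 * X 1) : MvPolynomial (Fin 2) k)} :=
  Ideal.span_singleton_inf_span_singleton_pow_mul X_prime (X_zero_not_dvd_X_one_sq_sub a)
    ⟨X 1 - C a * X 0, by ring⟩ t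

end MvPolynomial

theorem hilbFn_eq_sub_finrank (K : Ideal (MvPolynomial (Fin 2) k)) (n : ℕ) :
    hilbFn k K n = n + 1 - Module.finrank k (idealDegreePart k K n) := by
  rw [hilbFn, finrank_homogeneousSubmodule_fin_two]
  rfl

theorem hilbFn_span_X_one_sq_sub_X_zero_pow_mul_X_one (a : k) (t n : ℕ) :
    hilbFn k (Ideal.span {X 1 ^ 2 - C a * X 0 * X 1, X 0 ^ t * X 1}) n
      = if n = 0 then 1 else if n ≤ t then 2 else 1 := by
  have hQ : (X 1 ^ 2 - C a * X 0 * X 1 : MvPolynomial (Fin 2) k) ≠ 0 :=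
    fun h => X_zero_not_dvd_X_one_sq_sub a (h ▸ dvd_zero _)
  have hX0t : (X 0 ^ t : MvPolynomial (Fin 2) k) ≠ 0 := pow_ne_zero _ (X_ne_zero 0)
  have hg : (X 0 ^ t * X 1 : MvPolynomial (Fin 2) k).IsHomogeneous (t + 1) :=
    (isHomogeneous_X_pow 0 t).mul (isHomogeneous_X k 1)
  have hsum := finrank_idealDegreePart_sup_add_inf
    (isHomogeneous_span_singleton (isHomogeneous_X_one_sq_sub a))
    (isHomogeneous_span_singleton hg) n
  rw [← Ideal.span_insert, span_X_one_sq_sub_inf_span_X_zero_pow_mul_X_one,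
    finrank_idealDegreePart_span_singleton
      ((isHomogeneous_X_pow 0 t).mul (isHomogeneous_X_one_sq_sub a)) (mul_ne_zero hX0t hQ),
    finrank_idealDegreePart_span_singleton (isHomogeneous_X_one_sq_sub a) hQ,
    finrank_idealDegreePart_span_singleton hg (mul_ne_zero hX0t (X_ne_zero 1))] at hsum
  rw [hilbFn_eq_sub_finrank]
  split_ifs <;> omega

theorem hilbert_function_Q_case
    (a : k) (t : ℕ)
    (Q : MvPolynomial (Fin 2) k) (hQ : Q = X 1 ^ 2 - C a * X 0 * X 1)
    (K : Ideal (MvPolynomial (Fin 2) k)) (hK : K = Ideal.span {Q, X 0 ^ t * X 1}) :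
    ((1 - PowerSeries.X) * PowerSeries.mk (fun n => (hilbFn k K n : ℤ))
        = 1 + PowerSeries.X - PowerSeries.X ^ (t + 1)) ∧
      hilbFn k K 0 = 1 ∧
      (∀ j, 1 ≤ j → j ≤ t → hilbFn k K j = 2) ∧
      (∀ j, t + 1 ≤ j → hilbFn k K j = 1) := by
  subst hQ hK
  have hH := hilbFn_span_X_one_sq_sub_X_zero_pow_mul_X_one k a t
  refine ⟨?_, by simp [hH], fun j hj1 hj2 => ?_, fun j hj => ?_⟩
  · ext (_ | m)
    · simp [hH, sub_mul]
    · simp only [sub_mul, one_mul, map_sub, map_add, PowerSeries.coeff_succ_X_mul,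
        PowerSeries.coeff_mk, PowerSeries.coeff_one, PowerSeries.coeff_X, PowerSeries.coeff_X_pow,
        hH, Nat.cast_ite, Nat.cast_one, Nat.cast_ofNat, Nat.add_one_ne_zero, if_false]
      split_ifs <;> omega
  · rw [hH, if_neg (by omega), if_pos hj2]
  · rw [hH, if_neg (by omega), if_neg (by omega)]
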